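/- For any set partition π of [n], the number of singular pairs satisfies |Sing(π)| = 2(dim(π) − d(π)) − crs(π). -/

import Mathlib

open scoped BigOperators
open Finset Classical

/-- Two indices lie in the same block of the set partition `P` of `[n]`. -/
def SameBlock {n : ℕ} (P : Finpartition (Finset.univ : Finset (Fin n))) (i j : Fin n) : Prop :=
  ∃ B ∈ P.parts, i ∈ B ∧ j ∈ B

/-- `(i,j)` is an arc of `P`: same block, `i < j`, no element of that block strictly between. -/
def IsArc {n : ℕ} (P : Finpartition (Finset.univ : Finset (Fin n))) (i j : Fin n) : Prop :=
  i < j ∧ SameBlock P i j ∧ ∀ k : Fin n, i < k → k < j → ¬ SameBlock P i k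

/-- The set of arcs `D(π)`. -/
noncomputable def arcs {n : ℕ} (P : Finpartition (Finset.univ : Finset (Fin n))) :
    Finset (Fin n × Fin n) :=
  Finset.univ.filter (fun p => IsArc P p.1 p.2)

/-- `d(π)`, the number of arcs. -/
noncomputable def dP {n : ℕ} (P : Finpartition (Finset.univ : Finset (Fin n))) : ℕ :=
  (arcs P).card

/-- `dim(π) = Σ_{(i,j) ∈ D(π)} (j - i)`. -/
noncomputable def dimP {n : ℕ} (P : Finpartition (Finset.univ : Finset (Fin n))) : ℕ :=
  ∑ p ∈ arcs P, (p.2.val - p.1.val)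

/-- `crs(π)`, the number of crossings, i.e. pairs of arcs `(i,j), (k,l)` with `i<k<j<l`. -/
noncomputable def crsP {n : ℕ} (P : Finpartition (Finset.univ : Finset (Fin n))) : ℕ :=
  (((arcs P) ×ˢ (arcs P)).filter
    (fun q => q.1.1 < q.2.1 ∧ q.2.1 < q.1.2 ∧ q.1.2 < q.2.2)).card

/-- `(i,j)` is a `π`-singular pair. -/
def SingularPair {n : ℕ} (P : Finpartition (Finset.univ : Finset (Fin n))) (i j : Fin n) : Prop :=
  i < j ∧ ((∃ k : Fin n, k < i ∧ IsArc P k j) ∨ (∃ l : Fin n, j < l ∧ IsArc P i l))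

/-- `(i,j)` is a `π`-regular pair. -/
def RegularPair {n : ℕ} (P : Finpartition (Finset.univ : Finset (Fin n))) (i j : Fin n) : Prop :=
  i < j ∧ ¬ ((∃ k : Fin n, k < i ∧ IsArc P k j) ∨ (∃ l : Fin n, j < l ∧ IsArc P i l))

/-- The set `Sing(π)` of singular pairs. -/
noncomputable def singP {n : ℕ} (P : Finpartition (Finset.univ : Finset (Fin n))) :
    Finset (Fin n × Fin n) :=
  Finset.univ.filter (fun p => SingularPair P p.1 p.2)

/-- The set `reg(π)` of regular pairs. -/
noncomputable def regP {n : ℕ} (P : Finpartition (Finset.univ : Finset (Fin n))) :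
    Finset (Fin n × Fin n) :=
  Finset.univ.filter (fun p => RegularPair P p.1 p.2)

/-!
Count pairs with multiplicity: a pair `p` is covered by the arcs `σ` with `p ∈ Sing(σ)`, and an arc
`(i, j)` covers exactly `2 (j - i - 1)` pairs, so the total multiplicity is `2 (dim(π) - d(π))`.
Since an element starts at most one arc and ends at most one arc, every pair is covered at most
twice, and twice exactly when it is `(k, j)` for a crossing `i < k < j < l` of arcs `(i, j), (k, l)`.
Hence the total multiplicity is `|Sing(π)| + crs(π)`.
-/

namespace SetPartition

variable {n : ℕ} {P : Finpartition (Finset.univ : Finset (Fin n))}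

lemma SameBlock.symm {i j : Fin n} (h : SameBlock P i j) : SameBlock P j i :=
  let ⟨B, hB, hi, hj⟩ := h; ⟨B, hB, hj, hi⟩

lemma SameBlock.trans {i j k : Fin n} (hij : SameBlock P i j) (hjk : SameBlock P j k) :
    SameBlock P i k := by
  obtain ⟨B, hB, hi, hj⟩ := hij
  obtain ⟨C, hC, hj', hk⟩ := hjk
  exact ⟨B, hB, hi, P.eq_of_mem_parts hC hB hj' hj ▸ hk⟩

lemma IsArc.right_unique {i j l : Fin n} (hj : IsArc P i j) (hl : IsArc P i l) : j = l := by
  rcases lt_trichotomy j l with h | h | h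
  · exact absurd hj.2.1 (hl.2.2 j hj.1 h)
  · exact h
  · exact absurd hl.2.1 (hj.2.2 l hl.1 h)

lemma IsArc.left_unique {i j k : Fin n} (hi : IsArc P i j) (hk : IsArc P k j) : i = k := by
  rcases lt_trichotomy i k with h | h | h
  · exact absurd (SameBlock.trans hi.2.1 (SameBlock.symm hk.2.1)) (hi.2.2 k h hk.1)
  · exact h
  · exact absurd (SameBlock.trans hk.2.1 (SameBlock.symm hi.2.1)) (hk.2.2 i h hi.1)

lemma mem_arcs {a : Fin n × Fin n} : a ∈ arcs P ↔ IsArc P a.1 a.2 := by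
  simp [arcs]

variable (P)

/-- Together, `arcsFrom P p` and `arcsInto P p` are the arcs `σ` with `p ∈ Sing(σ)`, split according
to whether `p` shares the left or the right endpoint of `σ`. -/
noncomputable def arcsFrom (p : Fin n × Fin n) : Finset (Fin n × Fin n) :=
  (arcs P).filter fun a => a.1 = p.1 ∧ p.1 < p.2 ∧ p.2 < a.2

noncomputable def arcsInto (p : Fin n × Fin n) : Finset (Fin n × Fin n) :=
  (arcs P).filter fun a => a.2 = p.2 ∧ a.1 < p.1 ∧ p.1 < p.2

lemma card_arcsFrom_le_one (p : Fin n × Fin n) : (arcsFrom P p).card ≤ 1 := by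
  refine Finset.card_le_one.2 fun a ha b hb => ?_
  simp only [arcsFrom, Finset.mem_filter, mem_arcs] at ha hb
  have h₁ : a.1 = b.1 := ha.2.1.trans hb.2.1.symm
  exact Prod.ext h₁ (IsArc.right_unique ha.1 (h₁ ▸ hb.1))

lemma card_arcsInto_le_one (p : Fin n × Fin n) : (arcsInto P p).card ≤ 1 := by
  refine Finset.card_le_one.2 fun a ha b hb => ?_
  simp only [arcsInto, Finset.mem_filter, mem_arcs] at ha hb
  have h₂ : a.2 = b.2 := ha.2.1.trans hb.2.1.symm
  exact Prod.ext (IsArc.left_unique ha.1 (h₂ ▸ hb.1)) h₂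

lemma mem_singP_iff (p : Fin n × Fin n) :
    p ∈ singP P ↔ (arcsFrom P p).Nonempty ∨ (arcsInto P p).Nonempty := by
  have hmem : p ∈ singP P ↔ SingularPair P p.1 p.2 := by simp [singP]
  simp only [hmem, SingularPair, arcsFrom, arcsInto, Finset.mem_filter, Finset.Nonempty,
    mem_arcs, Prod.exists]
  constructor
  · rintro ⟨hp, ⟨k, hk, hkj⟩ | ⟨l, hl, hil⟩⟩
    · exact Or.inr ⟨k, p.2, hkj, rfl, hk, hp⟩
    · exact Or.inl ⟨p.1, l, hil, rfl, hp, hl⟩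
  · rintro (⟨i, l, hil, rfl, hp, hl⟩ | ⟨k, j, hkj, rfl, hk, hp⟩)
    · exact ⟨hp, Or.inr ⟨l, hl, hil⟩⟩
    · exact ⟨hp, Or.inl ⟨k, hk, hkj⟩⟩

/-- A crossing `i < k < j < l` of the arcs `(i, j)` and `(k, l)` is recorded by the pair `(k, j)`,
which is singular from both sides. -/
lemma crsP_eq_sum : crsP P = ∑ p, (arcsInto P p).card * (arcsFrom P p).card := by
  have hcrossings : ((arcs P ×ˢ arcs P).filter
      fun q => q.1.1 < q.2.1 ∧ q.2.1 < q.1.2 ∧ q.1.2 < q.2.2) =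
      Finset.univ.biUnion fun p => arcsInto P p ×ˢ arcsFrom P p := by
    ext ⟨a, b⟩
    simp only [arcsInto, arcsFrom, Finset.mem_filter, Finset.mem_product, Finset.mem_biUnion,
      Finset.mem_univ, true_and, Prod.exists]
    constructor
    · rintro ⟨⟨ha, hb⟩, h₁, h₂, h₃⟩
      exact ⟨b.1, a.2, ⟨ha, rfl, h₁, h₂⟩, hb, rfl, h₂, h₃⟩
    · rintro ⟨k, j, ⟨ha, rfl, h₁, h₂⟩, hb, rfl, -, h₃⟩
      exact ⟨⟨ha, hb⟩, h₁, h₂, h₃⟩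
  rw [crsP, hcrossings, Finset.card_biUnion]
  · simp only [Finset.card_product]
  · intro p _ p' _ hne
    refine Finset.disjoint_left.2 fun q hq hq' => hne ?_
    simp only [arcsInto, arcsFrom, Finset.mem_filter, Finset.mem_product] at hq hq'
    exact Prod.ext (hq.2.2.1.symm.trans hq'.2.2.1) (hq.1.2.1.symm.trans hq'.1.2.1)

/-- Each arc `(i, j)` lies in `arcsFrom P (i, t)` for the `j - i - 1` points `i < t < j`. -/
lemma sum_card_arcsFrom : ∑ p, (arcsFrom P p).card = ∑ a ∈ arcs P, (a.2.val - a.1.val - 1) := by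
  simp only [arcsFrom, Finset.card_filter]
  rw [Finset.sum_comm]
  refine Finset.sum_congr rfl fun a _ => ?_
  have hpairs : (Finset.univ.filter fun p : Fin n × Fin n => a.1 = p.1 ∧ p.1 < p.2 ∧ p.2 < a.2) =
      (Finset.Ioo a.1 a.2).map (Function.Embedding.sectR a.1 (Fin n)) := by
    ext ⟨i, t⟩
    simp only [Finset.mem_filter, Finset.mem_univ, true_and, Finset.mem_map, Finset.mem_Ioo,
      Function.Embedding.sectR_apply, Prod.mk.injEq]
    constructor
    · rintro ⟨rfl, h₁, h₂⟩
      exact ⟨t, ⟨h₁, h₂⟩, rfl, rfl⟩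
    · rintro ⟨t, ⟨h₁, h₂⟩, rfl, rfl⟩
      exact ⟨rfl, h₁, h₂⟩
  rw [← Finset.card_filter, hpairs, Finset.card_map, Fin.card_Ioo]

lemma sum_card_arcsInto : ∑ p, (arcsInto P p).card = ∑ a ∈ arcs P, (a.2.val - a.1.val - 1) := by
  simp only [arcsInto, Finset.card_filter]
  rw [Finset.sum_comm]
  refine Finset.sum_congr rfl fun a _ => ?_
  have hpairs : (Finset.univ.filter fun p : Fin n × Fin n => a.2 = p.2 ∧ a.1 < p.1 ∧ p.1 < p.2) =
      (Finset.Ioo a.1 a.2).map (Function.Embedding.sectL (Fin n) a.2) := by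
    ext ⟨s, j⟩
    simp only [Finset.mem_filter, Finset.mem_univ, true_and, Finset.mem_map, Finset.mem_Ioo,
      Function.Embedding.sectL_apply, Prod.mk.injEq]
    constructor
    · rintro ⟨rfl, h₁, h₂⟩
      exact ⟨s, ⟨h₁, h₂⟩, rfl, rfl⟩
    · rintro ⟨s, ⟨h₁, h₂⟩, rfl, rfl⟩
      exact ⟨rfl, h₁, h₂⟩
  rw [← Finset.card_filter, hpairs, Finset.card_map, Fin.card_Ioo]

lemma card_singP_add_crsP :
    (singP P).card + crsP P = ∑ p, ((arcsFrom P p).card + (arcsInto P p).card) := by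
  have hsing : (singP P).card = ∑ p, if p ∈ singP P then 1 else 0 := by simp
  rw [hsing, crsP_eq_sum, ← Finset.sum_add_distrib]
  refine Finset.sum_congr rfl fun p _ => ?_
  simp only [mem_singP_iff, ← Finset.card_pos]
  rcases Nat.le_one_iff_eq_zero_or_eq_one.1 (card_arcsFrom_le_one P p) with h | h <;>
  rcases Nat.le_one_iff_eq_zero_or_eq_one.1 (card_arcsInto_le_one P p) with h' | h' <;>
  simp [h, h']

lemma sum_sub_one_add_dP_eq_dimP :
    ∑ a ∈ arcs P, (a.2.val - a.1.val - 1) + dP P = dimP P := by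
  rw [dP, Finset.card_eq_sum_ones, ← Finset.sum_add_distrib, dimP]
  refine Finset.sum_congr rfl fun a ha => ?_
  have := (mem_arcs.1 ha).1
  omega

end SetPartition

theorem stmt10 (n : ℕ) (P : Finpartition (Finset.univ : Finset (Fin n))) :
    ((singP P).card : ℤ) = 2 * ((dimP P : ℤ) - (dP P : ℤ)) - (crsP P : ℤ) := by
  have hcount := SetPartition.card_singP_add_crsP P
  rw [Finset.sum_add_distrib, SetPartition.sum_card_arcsFrom, SetPartition.sum_card_arcsInto]
    at hcount
  have hdim := SetPartition.sum_sub_one_add_dP_eq_dimP P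
  omega
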